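/- arXiv:1911.04009 — 4 statements merged into one kernel-verified Lean document; each statement's English description precedes it below -/
import Mathlib

section
/- Let m > 0, q, γ ∈ ℝ, let φ : ℝ → ℝ be continuously differentiable, and fix x₀ ∈ ℝ. Define ε₀(x,v) := qφ(x) + (1/2)mv², and on the open set Ω ⊆ ℝ × (ℝ \ {0}) of points (x,v) such that qφ(x') < ε₀(x,v) for every x' between x₀ and x, define the generating function ψ(x,v) := −γ√(m/2)·(v/|v|)·∫_{x₀}^{x} φ(x') / √(ε₀(x,v) − qφ(x')) dx'. Then ψ is differentiable on Ω and satisfies the first-order partial differential equation v·∂ψ/∂x − (q/m)·φ'(x)·∂ψ/∂v = −γ·φ(x) at every point of Ω. -/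
open Real MeasureTheory intervalIntegral

noncomputable def auxF (q : ℝ) (φ : ℝ → ℝ) (x₀ : ℝ) (p : ℝ × ℝ) : ℝ :=
  ∫ t in x₀..p.1, φ t / Real.sqrt (p.2 - q * φ t)

lemma endpoint_hasFDerivAt (G : ℝ × ℝ → ℝ) (U : Set (ℝ × ℝ)) (hU : IsOpen U)
    (hG : ContinuousOn G U) (x₁ E₁ : ℝ) (hmem : (x₁, E₁) ∈ U) :
    HasFDerivAt (fun p : ℝ × ℝ => ∫ t in x₁..p.1, G (t, p.2))
      ((ContinuousLinearMap.fst ℝ ℝ ℝ).smulRight (G (x₁, E₁))) ((x₁, E₁) : ℝ × ℝ) := by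
  rw [hasFDerivAt_iff_isLittleO]
  rw [Asymptotics.isLittleO_iff]
  intro c hc
  have hcont : ContinuousAt G (x₁, E₁) := hG.continuousAt (hU.mem_nhds hmem)
  obtain ⟨r₁, hr₁, hr₁'⟩ := Metric.continuousAt_iff.1 hcont c hc
  obtain ⟨r₂, hr₂, hr₂'⟩ := Metric.isOpen_iff.1 hU _ hmem
  set r := min r₁ r₂ with hr
  have hrpos : 0 < r := lt_min hr₁ hr₂
  filter_upwards [Metric.ball_mem_nhds ((x₁, E₁) : ℝ × ℝ) hrpos] with p hp
  -- key: points (t, p.2) for t ∈ uIcc x₁ p.1 are in ball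
  have hkey : ∀ t ∈ Set.uIcc x₁ p.1, dist ((t, p.2) : ℝ × ℝ) (x₁, E₁) < r := by
    intro t ht
    have h1 : dist t x₁ ≤ dist p.1 x₁ := by
      rw [Set.mem_uIcc] at ht
      rw [Real.dist_eq, Real.dist_eq, abs_le]
      rcases ht with ⟨ha, hb⟩ | ⟨ha, hb⟩ <;>
        constructor <;> [skip; skip; skip; skip] <;>
        · cases le_or_gt x₁ p.1 with
          | inl h => rw [abs_of_nonneg (by linarith)]; linarith
          | inr h => rw [abs_of_neg (by linarith)]; linarith
    have h2 : dist p (x₁, E₁) < r := hp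
    rw [Prod.dist_eq] at h2 ⊢
    simp only [max_lt_iff] at h2 ⊢
    exact ⟨lt_of_le_of_lt h1 h2.1, h2.2⟩
  have hmemU : ∀ t ∈ Set.uIcc x₁ p.1, ((t, p.2) : ℝ × ℝ) ∈ U := fun t ht =>
    hr₂' (Metric.mem_ball.2 (lt_of_lt_of_le (hkey t ht) (min_le_right _ _)))
  have hcontOn : ContinuousOn (fun t => G (t, p.2)) (Set.uIcc x₁ p.1) :=
    hG.comp (Continuous.continuousOn (by continuity)) hmemU
  have hint : IntervalIntegrable (fun t => G (t, p.2)) volume x₁ p.1 :=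
    hcontOn.intervalIntegrable
  have heq : (∫ t in x₁..p.1, G (t, p.2)) - (∫ t in x₁..x₁, G (t, E₁))
      - ((ContinuousLinearMap.fst ℝ ℝ ℝ).smulRight (G (x₁, E₁))) (p - (x₁, E₁))
      = ∫ t in x₁..p.1, (G (t, p.2) - G (x₁, E₁)) := by
    rw [intervalIntegral.integral_same, intervalIntegral.integral_sub hint
      intervalIntegrable_const, intervalIntegral.integral_const]
    simp only [ContinuousLinearMap.smulRight_apply, ContinuousLinearMap.coe_fst',
      Prod.fst_sub, smul_eq_mul, sub_zero]
  rw [heq]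
  have hbd : ∀ t ∈ Set.uIoc x₁ p.1, ‖G (t, p.2) - G (x₁, E₁)‖ ≤ c := by
    intro t ht
    have := hr₁' (lt_of_lt_of_le (hkey t (Set.Ioc_subset_Icc_self ht)) (min_le_left _ _))
    rw [Real.dist_eq] at this
    exact le_of_lt this
  calc ‖∫ t in x₁..p.1, (G (t, p.2) - G (x₁, E₁))‖
      ≤ c * |p.1 - x₁| := intervalIntegral.norm_integral_le_of_norm_le_const hbd
    _ ≤ c * ‖p - (x₁, E₁)‖ := by
        apply mul_le_mul_of_nonneg_left _ (le_of_lt hc)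
        have : |p.1 - x₁| = ‖(p - ((x₁, E₁) : ℝ × ℝ)).1‖ := by simp [Real.norm_eq_abs]
        rw [this]
        exact norm_fst_le _

lemma aux_main (q : ℝ) (φ : ℝ → ℝ) (hφc : Continuous φ) (x₀ x₁ E₁ : ℝ)
    (hpos : ∀ t ∈ Set.uIcc x₀ x₁, q * φ t < E₁) :
    ∃ D : ℝ, HasFDerivAt (auxF q φ x₀)
      ((ContinuousLinearMap.fst ℝ ℝ ℝ).smulRight (φ x₁ / Real.sqrt (E₁ - q * φ x₁))
        + D • (ContinuousLinearMap.snd ℝ ℝ ℝ)) ((x₁, E₁) : ℝ × ℝ) := by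
  -- uniform gap δ on the compact interval
  obtain ⟨t₀, ht₀, hmin⟩ := isCompact_uIcc.exists_isMinOn (Set.nonempty_uIcc)
    ((continuous_const.sub (continuous_const.mul hφc)).continuousOn :
      ContinuousOn (fun t => E₁ - q * φ t) (Set.uIcc x₀ x₁))
  set δ : ℝ := E₁ - q * φ t₀ with hδdef
  have hδ : 0 < δ := sub_pos.2 (hpos t₀ ht₀)
  have hgap : ∀ t ∈ Set.uIcc x₀ x₁, δ ≤ E₁ - q * φ t := fun t ht => hmin ht
  -- derivative of the parametric integral with fixed endpoints
  set F : ℝ → ℝ → ℝ := fun E t => φ t / Real.sqrt (E - q * φ t) with hFdef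
  set F' : ℝ → ℝ → ℝ := fun E t =>
    φ t * (-(1 / (2 * Real.sqrt (E - q * φ t)) * 1) / Real.sqrt (E - q * φ t) ^ 2) with hF'def
  have hmeasF : ∀ E : ℝ, AEStronglyMeasurable (F E) (volume.restrict (Set.uIoc x₀ x₁)) := by
    intro E
    exact ((hφc.measurable.div ((Real.continuous_sqrt.comp
      (continuous_const.sub (continuous_const.mul hφc))).measurable))).aestronglyMeasurable
  have hmeasF' : AEStronglyMeasurable (F' E₁) (volume.restrict (Set.uIoc x₀ x₁)) := by
    have h1 : Measurable fun t => Real.sqrt (E₁ - q * φ t) :=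
      (Real.continuous_sqrt.comp (continuous_const.sub (continuous_const.mul hφc))).measurable
    exact (hφc.measurable.mul (((measurable_const.div
      (measurable_const.mul h1)).mul measurable_const).neg.div (h1.pow_const 2))).aestronglyMeasurable
  -- bound for F' on closedBall E₁ (δ/2) × uIcc
  have hgap2 : ∀ E ∈ Metric.closedBall E₁ (δ / 2), ∀ t ∈ Set.uIcc x₀ x₁,
      δ / 2 ≤ E - q * φ t := by
    intro E hE t ht
    have h1 := hgap t ht
    have h2 : |E - E₁| ≤ δ / 2 := by
      rw [Metric.mem_closedBall, Real.dist_eq] at hE; exact hE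
    have := abs_le.1 h2
    linarith [this.1]
  have hcontF' : ContinuousOn (fun z : ℝ × ℝ => F' z.1 z.2)
      (Metric.closedBall E₁ (δ / 2) ×ˢ Set.uIcc x₀ x₁) := by
    have hsq : ContinuousOn (fun z : ℝ × ℝ => Real.sqrt (z.1 - q * φ z.2))
        (Metric.closedBall E₁ (δ / 2) ×ˢ Set.uIcc x₀ x₁) :=
      (Real.continuous_sqrt.comp (continuous_fst.sub (continuous_const.mul (hφc.comp continuous_snd)))).continuousOn
    have hne : ∀ z ∈ (Metric.closedBall E₁ (δ / 2) ×ˢ Set.uIcc x₀ x₁),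
        Real.sqrt (z.1 - q * φ z.2) ≠ 0 := by
      intro z hz
      have := hgap2 z.1 hz.1 z.2 hz.2
      exact (Real.sqrt_pos.2 (by linarith)).ne'
    have h2s : ContinuousOn (fun z : ℝ × ℝ => 2 * Real.sqrt (z.1 - q * φ z.2))
        (Metric.closedBall E₁ (δ / 2) ×ˢ Set.uIcc x₀ x₁) := continuousOn_const.mul hsq
    apply ContinuousOn.mul (hφc.comp continuous_snd).continuousOn
    apply ContinuousOn.div _ (hsq.pow 2) (fun z hz => pow_ne_zero 2 (hne z hz))
    exact ((continuousOn_const.div h2s (fun z hz =>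
      mul_ne_zero two_ne_zero (hne z hz))).mul continuousOn_const).neg
  obtain ⟨C, hC⟩ := ((isCompact_closedBall E₁ (δ / 2)).prod isCompact_uIcc).exists_bound_of_continuousOn hcontF'
  -- the HasDerivAt facts
  have hderivF : ∀ t, 0 < E₁ - q * φ t → True := fun _ _ => trivial
  have h_diff : ∀ t ∈ Set.uIoc x₀ x₁, ∀ E ∈ Metric.ball E₁ (δ / 2),
      HasDerivAt (fun E => F E t) (F' E t) E := by
    intro t ht E hE
    have htI : t ∈ Set.uIcc x₀ x₁ := Set.Ioc_subset_Icc_self ht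
    have hpos' : δ / 2 ≤ E - q * φ t :=
      hgap2 E (Metric.ball_subset_closedBall hE) t htI
    have hne : E - q * φ t ≠ 0 := by linarith
    have h1 : HasDerivAt (fun E : ℝ => E - q * φ t) 1 E := (hasDerivAt_id E).sub_const _
    have h2 : HasDerivAt (fun E : ℝ => Real.sqrt (E - q * φ t))
        (1 / (2 * Real.sqrt (E - q * φ t)) * 1) E :=
      (Real.hasDerivAt_sqrt hne).comp E h1
    have hsne : Real.sqrt (E - q * φ t) ≠ 0 :=
      (Real.sqrt_pos.2 (by linarith)).ne'
    have h3 : HasDerivAt (fun E : ℝ => φ t * (Real.sqrt (E - q * φ t))⁻¹) _ E :=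
      (h2.inv hsne).const_mul (φ t)
    have : (fun E : ℝ => φ t * (Real.sqrt (E - q * φ t))⁻¹) = fun E => F E t := by
      funext E; simp [hFdef, div_eq_mul_inv]
    rw [this] at h3
    exact h3
  have hintF : IntervalIntegrable (F E₁) volume x₀ x₁ := by
    apply ContinuousOn.intervalIntegrable
    apply ContinuousOn.div hφc.continuousOn
      ((Real.continuous_sqrt.comp (continuous_const.sub (continuous_const.mul hφc))).continuousOn)
    intro t ht
    have h := hgap t ht
    exact (Real.sqrt_pos.2 (by change (0:ℝ) < E₁ - q * φ t; linarith)).ne'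
  have hδ2 : 0 < δ / 2 := by linarith
  obtain ⟨-, hA⟩ := intervalIntegral.hasDerivAt_integral_of_dominated_loc_of_deriv_le
    (F := F) (F' := F') (bound := fun _ => C) (μ := volume) (a := x₀) (b := x₁) (Metric.ball_mem_nhds E₁ hδ2)
    (Filter.Eventually.of_forall fun E => hmeasF E) hintF hmeasF'
    (Filter.Eventually.of_forall fun t ht E hE =>
      hC (E, t) ⟨Metric.ball_subset_closedBall hE, Set.Ioc_subset_Icc_self ht⟩)
    intervalIntegrable_const
    (Filter.Eventually.of_forall fun t ht E hE => h_diff t ht E hE)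
  -- endpoint part
  set U : Set (ℝ × ℝ) := {z : ℝ × ℝ | q * φ z.1 < z.2} with hUdef
  have hUopen : IsOpen U := isOpen_lt (continuous_const.mul (hφc.comp continuous_fst)) continuous_snd
  set G : ℝ × ℝ → ℝ := fun z => φ z.1 / Real.sqrt (z.2 - q * φ z.1) with hGdef
  have hGcont : ContinuousOn G U := by
    apply ContinuousOn.div (hφc.comp continuous_fst).continuousOn
      ((Real.continuous_sqrt.comp (continuous_snd.sub (continuous_const.mul (hφc.comp continuous_fst)))).continuousOn)
    intro z hz
    exact (Real.sqrt_pos.2 (sub_pos.2 hz)).ne'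
  have hmemU : ((x₁, E₁) : ℝ × ℝ) ∈ U := hpos x₁ Set.right_mem_uIcc
  have hEnd := endpoint_hasFDerivAt G U hUopen hGcont x₁ E₁ hmemU
  -- A ∘ snd part
  have hAsnd : HasFDerivAt (fun p : ℝ × ℝ => ∫ t in x₀..x₁, F p.2 t)
      ((∫ t in x₀..x₁, F' E₁ t) • (ContinuousLinearMap.snd ℝ ℝ ℝ)) ((x₁, E₁) : ℝ × ℝ) :=
    by have := hA.comp_hasFDerivAt (f := Prod.snd) ((x₁, E₁) : ℝ × ℝ) (hasFDerivAt_snd (𝕜 := ℝ) (p := ((x₁, E₁) : ℝ × ℝ))); exact this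
  refine ⟨∫ t in x₀..x₁, F' E₁ t, ?_⟩
  have hsum := hAsnd.add hEnd
  -- identify the sum with auxF near the point
  have heta : 0 < E₁ - δ / 2 - q * φ x₁ := by
    have := hgap x₁ Set.right_mem_uIcc; linarith
  obtain ⟨η, hη, hη'⟩ := Metric.isOpen_iff.1
    (isOpen_lt (continuous_const.mul hφc) continuous_const :
      IsOpen {t : ℝ | q * φ t < E₁ - δ / 2}) x₁ (by simpa using by linarith [hgap x₁ Set.right_mem_uIcc] : x₁ ∈ {t : ℝ | q * φ t < E₁ - δ / 2})
  have hev : (auxF q φ x₀) =ᶠ[nhds ((x₁, E₁) : ℝ × ℝ)]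
      (fun p : ℝ × ℝ => (∫ t in x₀..x₁, F p.2 t) + ∫ t in x₁..p.1, G (t, p.2)) := by
    have hnb : (Metric.ball x₁ η ×ˢ Metric.ball E₁ (δ / 2)) ∈ nhds ((x₁, E₁) : ℝ × ℝ) :=
      prod_mem_nhds (Metric.ball_mem_nhds _ hη) (Metric.ball_mem_nhds _ hδ2)
    filter_upwards [hnb] with p hp
    obtain ⟨hp1, hp2⟩ := hp
    have hElt : E₁ - δ / 2 < p.2 := by
      have : |p.2 - E₁| < δ / 2 := by rw [← Real.dist_eq]; exact hp2
      linarith [(abs_lt.1 this).1]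
    have hposI : ∀ t ∈ Set.uIcc x₀ x₁, q * φ t < p.2 := by
      intro t ht; have := hgap t ht; linarith
    have hposJ : ∀ t ∈ Set.uIcc x₁ p.1, q * φ t < p.2 := by
      intro t ht
      have htball : t ∈ Metric.ball x₁ η := by
        rw [Metric.mem_ball, Real.dist_eq]
        have h1 : dist p.1 x₁ < η := hp1
        rw [Real.dist_eq] at h1
        rw [Set.mem_uIcc] at ht
        rw [abs_lt] at h1 ⊢
        rcases ht with ⟨ha, hb⟩ | ⟨ha, hb⟩ <;> constructor <;> linarith [h1.1, h1.2]
      have := hη' htball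
      simp only [Set.mem_setOf_eq] at this
      linarith
    have hintI : IntervalIntegrable (fun t => φ t / Real.sqrt (p.2 - q * φ t)) volume x₀ x₁ := by
      apply ContinuousOn.intervalIntegrable
      apply ContinuousOn.div hφc.continuousOn
        ((Real.continuous_sqrt.comp (continuous_const.sub (continuous_const.mul hφc))).continuousOn)
      intro t ht
      exact (Real.sqrt_pos.2 (sub_pos.2 (hposI t ht))).ne'
    have hintJ : IntervalIntegrable (fun t => φ t / Real.sqrt (p.2 - q * φ t)) volume x₁ p.1 := by
      apply ContinuousOn.intervalIntegrable
      apply ContinuousOn.div hφc.continuousOn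
        ((Real.continuous_sqrt.comp (continuous_const.sub (continuous_const.mul hφc))).continuousOn)
      intro t ht
      exact (Real.sqrt_pos.2 (sub_pos.2 (hposJ t ht))).ne'
    show auxF q φ x₀ p = _
    rw [auxF]
    rw [← intervalIntegral.integral_add_adjacent_intervals hintI hintJ]
  exact (hsum.congr_of_eventuallyEq hev).congr_fderiv (by
    rw [add_comm])

/-- The growth-rate generating function `ψ` for a single wavepacket of constant
frequency solves the first-order PDE `v ∂ψ/∂x − (q/m) φ' ∂ψ/∂v = −γ φ`
on the region `Ω` where the closed-form integral is well defined. -/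
theorem generating_function_solves_growth_pde
    (m q γ : ℝ) (hm : 0 < m)
    (φ : ℝ → ℝ) (hφ : ContDiff ℝ 1 φ)
    (x₀ : ℝ)
    (ε₀ : ℝ → ℝ → ℝ)
    (hε₀ : ∀ x v, ε₀ x v = q * φ x + (1 / 2) * m * v ^ 2)
    (Ω : Set (ℝ × ℝ))
    (hΩ : Ω = {p : ℝ × ℝ | p.2 ≠ 0 ∧
      ∀ x' ∈ Set.uIcc x₀ p.1, q * φ x' < ε₀ p.1 p.2})
    (ψ : ℝ → ℝ → ℝ)
    (hψ : ∀ x v, ψ x v =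
      -γ * Real.sqrt (m / 2) * (v / |v|) *
        ∫ x' in x₀..x, φ x' / Real.sqrt (ε₀ x v - q * φ x')) :
    ∀ p ∈ Ω,
      DifferentiableAt ℝ (fun p : ℝ × ℝ => ψ p.1 p.2) p ∧
      p.2 * deriv (fun x => ψ x p.2) p.1
        - (q / m) * deriv φ p.1 * deriv (fun v => ψ p.1 v) p.2
        = -γ * φ p.1 := by
  rintro ⟨x₁, v₁⟩ hp
  rw [hΩ] at hp
  simp only [Set.mem_setOf_eq, hε₀] at hp
  obtain ⟨hv, hpos'⟩ := hp
  have hφd : DifferentiableAt ℝ φ x₁ := (hφ.differentiable one_ne_zero).differentiableAt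
  obtain ⟨D, hL⟩ := aux_main q φ hφ.continuous x₀ x₁ (q * φ x₁ + 1 / 2 * m * v₁ ^ 2) hpos'
  have habs : (0:ℝ) < |v₁| := abs_pos.2 hv
  -- sign lemma
  have hsign : ∀ v ∈ Metric.ball v₁ |v₁|, v / |v| = v₁ / |v₁| := by
    intro v hv'
    rw [Metric.mem_ball, Real.dist_eq] at hv'
    rcases lt_or_gt_of_ne hv with h1 | h1
    · have h2 : v < 0 := by
        rw [abs_of_neg h1] at hv'
        have := (abs_lt.1 hv').2; linarith
      rw [abs_of_neg h1, abs_of_neg h2, div_neg, div_neg, div_self h2.ne, div_self h1.ne]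
    · have h2 : 0 < v := by
        rw [abs_of_pos h1] at hv'
        have := (abs_lt.1 hv').1; linarith
      rw [abs_of_pos h1, abs_of_pos h2, div_self h2.ne', div_self h1.ne']
  -- differentiability of the full map
  have hc1 : DifferentiableAt ℝ (fun p : ℝ × ℝ => φ p.1) ((x₁, v₁) : ℝ × ℝ) :=
    hφd.comp _ differentiableAt_fst
  have hΦ : DifferentiableAt ℝ
      (fun p : ℝ × ℝ => ((p.1, q * φ p.1 + 1 / 2 * m * p.2 ^ 2) : ℝ × ℝ)) ((x₁, v₁) : ℝ × ℝ) :=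
    differentiableAt_fst.prodMk ((hc1.const_mul q).add
      ((differentiableAt_snd.pow 2).const_mul (1 / 2 * m)))
  have hFd : DifferentiableAt ℝ (fun p : ℝ × ℝ =>
      auxF q φ x₀ ((p.1, q * φ p.1 + 1 / 2 * m * p.2 ^ 2) : ℝ × ℝ)) ((x₁, v₁) : ℝ × ℝ) :=
    by have := DifferentiableAt.comp (f := fun p : ℝ × ℝ => ((p.1, q * φ p.1 + 1 / 2 * m * p.2 ^ 2) : ℝ × ℝ)) _ hL.differentiableAt hΦ; exact this
  have hnb : (Prod.snd ⁻¹' Metric.ball v₁ |v₁| : Set (ℝ × ℝ)) ∈ nhds ((x₁, v₁) : ℝ × ℝ) :=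
    continuous_snd.continuousAt.preimage_mem_nhds (Metric.ball_mem_nhds _ habs)
  have hev : (fun p : ℝ × ℝ => ψ p.1 p.2) =ᶠ[nhds ((x₁, v₁) : ℝ × ℝ)]
      (fun p : ℝ × ℝ => -γ * Real.sqrt (m / 2) * (v₁ / |v₁|) *
        auxF q φ x₀ ((p.1, q * φ p.1 + 1 / 2 * m * p.2 ^ 2) : ℝ × ℝ)) := by
    filter_upwards [hnb] with p hp'
    rw [hψ, hε₀, hsign p.2 hp']
    simp only [auxF]
  refine ⟨(hFd.const_mul _).congr_of_eventuallyEq hev, ?_⟩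
  -- x-derivative
  have hcx : HasDerivAt (fun x => ((x, q * φ x + 1 / 2 * m * v₁ ^ 2) : ℝ × ℝ))
      ((1, q * deriv φ x₁) : ℝ × ℝ) x₁ :=
    (hasDerivAt_id x₁).prodMk ((hφd.hasDerivAt.const_mul q).add_const _)
  have hHx := hL.comp_hasDerivAt x₁ hcx
  have hfun1 : (fun x => ψ x v₁) = fun x => -γ * Real.sqrt (m / 2) * (v₁ / |v₁|) *
      auxF q φ x₀ ((x, q * φ x + 1 / 2 * m * v₁ ^ 2) : ℝ × ℝ) := by
    funext x; rw [hψ, hε₀]; simp only [auxF]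
  have hd1 : deriv (fun x => ψ x v₁) x₁ = -γ * Real.sqrt (m / 2) * (v₁ / |v₁|) *
      (((ContinuousLinearMap.fst ℝ ℝ ℝ).smulRight
          (φ x₁ / Real.sqrt (q * φ x₁ + 1 / 2 * m * v₁ ^ 2 - q * φ x₁))
        + D • (ContinuousLinearMap.snd ℝ ℝ ℝ)) ((1, q * deriv φ x₁) : ℝ × ℝ)) := by
    rw [hfun1]
    exact (hHx.const_mul _).deriv
  -- v-derivative
  have hcv : HasDerivAt (fun v => ((x₁, q * φ x₁ + 1 / 2 * m * v ^ 2) : ℝ × ℝ))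
      ((0, 1 / 2 * m * (2 * v₁ ^ 1)) : ℝ × ℝ) v₁ :=
    (hasDerivAt_const v₁ x₁).prodMk
      ((((hasDerivAt_pow 2 v₁).const_mul (1 / 2 * m)).const_add (q * φ x₁)).congr_deriv (by
        push_cast; ring))
  have hHv := hL.comp_hasDerivAt v₁ hcv
  have hev2 : (fun v => ψ x₁ v) =ᶠ[nhds v₁]
      (fun v => -γ * Real.sqrt (m / 2) * (v₁ / |v₁|) *
        auxF q φ x₀ ((x₁, q * φ x₁ + 1 / 2 * m * v ^ 2) : ℝ × ℝ)) := by
    filter_upwards [Metric.ball_mem_nhds v₁ habs] with v hv'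
    rw [hψ, hε₀, hsign v hv']
    simp only [auxF]
  have hd2 : deriv (fun v => ψ x₁ v) v₁ = -γ * Real.sqrt (m / 2) * (v₁ / |v₁|) *
      (((ContinuousLinearMap.fst ℝ ℝ ℝ).smulRight
          (φ x₁ / Real.sqrt (q * φ x₁ + 1 / 2 * m * v₁ ^ 2 - q * φ x₁))
        + D • (ContinuousLinearMap.snd ℝ ℝ ℝ)) ((0, 1 / 2 * m * (2 * v₁ ^ 1)) : ℝ × ℝ)) := by
    rw [hev2.deriv_eq]
    exact (hHv.const_mul _).deriv
  rw [hd1, hd2]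
  -- evaluate the linear maps
  simp only [ContinuousLinearMap.add_apply, ContinuousLinearMap.smulRight_apply,
    ContinuousLinearMap.coe_fst', ContinuousLinearMap.coe_smul', Pi.smul_apply,
    ContinuousLinearMap.coe_snd', smul_eq_mul]
  -- simplify the square root
  have hsqrt : Real.sqrt (q * φ x₁ + 1 / 2 * m * v₁ ^ 2 - q * φ x₁)
      = Real.sqrt (m / 2) * |v₁| := by
    rw [show q * φ x₁ + 1 / 2 * m * v₁ ^ 2 - q * φ x₁ = m / 2 * v₁ ^ 2 by ring,
      Real.sqrt_mul (by positivity), Real.sqrt_sq_eq_abs]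
  rw [hsqrt]
  have hs0 : (0:ℝ) < Real.sqrt (m / 2) := Real.sqrt_pos.2 (by positivity)
  have hsq : |v₁| * |v₁| = v₁ * v₁ := by rw [← abs_mul, abs_mul_self]
  field_simp
  linear_combination (γ * m * φ x₁) * hsq
end

section
/- Let ε₀ > 0 and q ∈ ℝ, let x₀ ≤ x be reals, and let φ : ℝ → ℝ be continuous on [x₀, x] with |q·φ(x')| < ε₀ for all x' ∈ [x₀, x]. Then the series ∑_{l=0}^{∞} ( (2l)! / (4^l (l!)²) ) · (q/ε₀)^l · ∫_{x₀}^{x} φ(x')^{l+1} dx' converges, and its sum equals √ε₀ · ∫_{x₀}^{x} φ(x') / √(ε₀ − q·φ(x')) dx'. -/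
open Real MeasureTheory

noncomputable def cc (l : ℕ) : ℝ := (Nat.factorial (2 * l) : ℝ) / (4 ^ l * (Nat.factorial l : ℝ) ^ 2)

lemma cc_zero : cc 0 = 1 := by simp [cc]
lemma cc_pos (l : ℕ) : 0 < cc l := by apply div_pos (by positivity); positivity
lemma cc_succ (l : ℕ) : cc (l + 1) = cc l * (2 * l + 1) / (2 * l + 2) := by
  have h1 : 2 * (l + 1) = 2 * l + 1 + 1 := by ring
  have hf : ((Nat.factorial l : ℝ)) ≠ 0 := Nat.cast_ne_zero.mpr (Nat.factorial_ne_zero l)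
  simp only [cc, h1, Nat.factorial_succ]; push_cast; field_simp; ring
lemma cc_antitone (l : ℕ) : cc (l + 1) ≤ cc l := by
  rw [cc_succ, div_le_iff₀ (by positivity)]; nlinarith [cc_pos l]
lemma cc_le_one (l : ℕ) : cc l ≤ 1 := by
  induction l with
  | zero => simp [cc_zero]
  | succ n ih => exact le_trans (cc_antitone n) ih

lemma summable_cc {z : ℝ} (hz : |z| < 1) : Summable (fun l => cc l * z ^ l) := by
  apply Summable.of_norm
  apply Summable.of_nonneg_of_le (fun l => norm_nonneg _) (fun l => ?_)
    (summable_geometric_of_lt_one (abs_nonneg z) hz)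
  rw [norm_mul, norm_pow, Real.norm_eq_abs, Real.norm_eq_abs,
    abs_of_pos (cc_pos l)]
  calc cc l * |z| ^ l ≤ 1 * |z| ^ l := by
        apply mul_le_mul_of_nonneg_right (cc_le_one l) (by positivity)
    _ = |z| ^ l := one_mul _

noncomputable def FF (y : ℝ) : ℝ := ∑' l, cc l * y ^ l

lemma FF_zero : FF 0 = 1 := by
  rw [FF, tsum_eq_single 0 (fun l hl => by
    simp [zero_pow hl])]
  simp [cc_zero]

lemma summable_deriv {r : ℝ} (hr0 : 0 ≤ r) (hr : r < 1) : Summable (fun n : ℕ => (n : ℝ) * r ^ (n - 1)) := by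
  rw [← summable_nat_add_iff 1]
  have : (fun n : ℕ => ((n + 1 : ℕ) : ℝ) * r ^ ((n + 1) - 1)) = fun n : ℕ => ((n : ℝ) + 1) * r ^ n := by
    funext n; push_cast; simp
  rw [this]
  have h0 : ‖r‖ < 1 := by rwa [Real.norm_eq_abs, abs_of_nonneg hr0]
  have h1 := summable_pow_mul_geometric_of_norm_lt_one 1 h0
  have h2 := summable_geometric_of_norm_lt_one h0
  simpa [add_mul, pow_one] using h1.add h2

lemma FF_hasDerivAt {r z : ℝ} (hr : r < 1) (hz : z ∈ Set.Ioo (-r) r) :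
    HasDerivAt FF (∑' n, cc n * ((n : ℝ) * z ^ (n - 1))) z := by
  have hrpos : 0 < r := by
    rcases hz with ⟨h1, h2⟩; linarith
  apply hasDerivAt_tsum_of_isPreconnected (u := fun n : ℕ => (n : ℝ) * r ^ (n - 1))
      (summable_deriv hrpos.le hr) isOpen_Ioo (convex_Ioo _ _).isPreconnected
      (fun n y _ => (hasDerivAt_pow n y).const_mul (cc n))
      (fun n y hy => ?_) (y₀ := 0) ⟨neg_lt_zero.mpr hrpos, hrpos⟩
      (summable_cc (by rw [abs_zero]; exact zero_lt_one)) hz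
  rw [Real.norm_eq_abs, abs_mul, abs_mul, abs_of_pos (cc_pos n), abs_pow]
  have hyr : |y| ≤ r := by
    rw [abs_le]; exact ⟨le_of_lt hy.1, le_of_lt hy.2⟩
  calc cc n * (|(n : ℝ)| * |y| ^ (n - 1)) ≤ 1 * (|(n : ℝ)| * r ^ (n - 1)) := by
        apply mul_le_mul (cc_le_one n) _ (by positivity) zero_le_one
        exact mul_le_mul_of_nonneg_left (pow_le_pow_left₀ (abs_nonneg y) hyr _) (abs_nonneg _)
    _ = (n : ℝ) * r ^ (n - 1) := by rw [one_mul, Nat.abs_cast]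

lemma FF_ode {y : ℝ} (hy : |y| < 1) :
    2 * (1 - y) * (∑' n, cc n * ((n : ℝ) * y ^ (n - 1))) = FF y := by
  have hyn : ‖|y|‖ < 1 := by rwa [Real.norm_eq_abs, abs_abs]
  -- w-series
  have hw : Summable (fun n : ℕ => 2 * (n:ℝ) * cc n * y ^ n) := by
    apply Summable.of_norm
    apply Summable.of_nonneg_of_le (fun l => norm_nonneg _) (fun n => ?_)
      ((summable_pow_mul_geometric_of_norm_lt_one 1 hyn).mul_left 2)
    rw [Real.norm_eq_abs, abs_mul, abs_mul, abs_mul, abs_pow, abs_of_pos (cc_pos n)]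
    simp only [Nat.abs_cast, abs_two, pow_one]
    calc 2 * (n:ℝ) * cc n * |y|^n ≤ 2 * n * 1 * |y|^n := by
          apply mul_le_mul_of_nonneg_right _ (by positivity)
          exact mul_le_mul_of_nonneg_left (cc_le_one n) (by positivity)
      _ = 2 * ((n:ℝ) * |y|^n) := by ring
  have hwsum := hw.hasSum
  set W := ∑' n : ℕ, 2 * (n:ℝ) * cc n * y ^ n with hWdef
  have hwshift : HasSum (fun n : ℕ => 2 * (((n+1 : ℕ)):ℝ) * cc (n+1) * y ^ (n+1))
      (W - ∑ i ∈ Finset.range 1, 2 * (i:ℝ) * cc i * y ^ i) :=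
    (hasSum_nat_add_iff' 1).mpr hwsum
  have hz1 : (∑ i ∈ Finset.range 1, 2 * (i:ℝ) * cc i * y ^ i) = 0 := by simp
  rw [hz1, sub_zero] at hwshift
  -- derivative series
  have hd : Summable (fun n : ℕ => cc n * ((n:ℝ) * y ^ (n - 1))) := by
    apply Summable.of_norm
    apply Summable.of_nonneg_of_le (fun l => norm_nonneg _) (fun n => ?_)
      (summable_deriv (abs_nonneg y) hy)
    rw [Real.norm_eq_abs, abs_mul, abs_mul, abs_pow, abs_of_pos (cc_pos n), Nat.abs_cast]
    calc cc n * ((n:ℝ) * |y| ^ (n-1)) ≤ 1 * ((n:ℝ) * |y| ^ (n-1)) :=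
          mul_le_mul_of_nonneg_right (cc_le_one n) (by positivity)
      _ = (n:ℝ) * |y| ^ (n-1) := one_mul _
  have hdsum := hd.hasSum
  set D := ∑' n : ℕ, cc n * ((n:ℝ) * y ^ (n - 1)) with hDdef
  have hdshift : HasSum (fun n : ℕ => cc (n+1) * ((((n+1:ℕ)):ℝ) * y ^ (n + 1 - 1)))
      (D - ∑ i ∈ Finset.range 1, cc i * ((i:ℝ) * y ^ (i - 1))) :=
    (hasSum_nat_add_iff' 1).mpr hdsum
  have hz2 : (∑ i ∈ Finset.range 1, cc i * ((i:ℝ) * y ^ (i - 1))) = 0 := by simp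
  rw [hz2, sub_zero] at hdshift
  have ht : HasSum (fun n : ℕ => cc n * y ^ n) (FF y) := (summable_cc hy).hasSum
  -- combine
  have hkey := (hdshift.mul_left (2 * (1 - y)))
  have htarget := (ht.add hwsum).sub hwshift
  have hfun : (fun n : ℕ => (cc n * y ^ n + 2 * (n:ℝ) * cc n * y ^ n)
        - 2 * (((n+1 : ℕ)):ℝ) * cc (n+1) * y ^ (n+1))
      = fun n : ℕ => 2 * (1 - y) * (cc (n+1) * ((((n+1:ℕ)):ℝ) * y ^ (n + 1 - 1))) := by
    funext n
    simp only [Nat.add_sub_cancel]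
    rw [cc_succ n]
    push_cast
    field_simp
    ring
  rw [hfun] at htarget
  have := hkey.unique htarget
  rw [this]; ring

lemma FF_sq {z : ℝ} (hz : |z| < 1) : FF z ^ 2 * (1 - z) = 1 := by
  set r := (|z| + 1) / 2 with hrdef
  have hr1 : r < 1 := by rw [hrdef]; linarith
  have hzr : |z| < r := by rw [hrdef]; linarith [abs_nonneg z]
  have hrpos : 0 < r := lt_of_le_of_lt (abs_nonneg z) hzr
  set s := Set.Ioo (-r) r with hsdef
  have hmem : ∀ y ∈ s, |y| < 1 := fun y hy =>
    lt_trans (abs_lt.mpr ⟨hy.1, hy.2⟩) hr1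
  -- G has zero derivative on s
  have hG : ∀ y ∈ s, HasDerivAt (fun t => FF t ^ 2 * (1 - t)) 0 y := by
    intro y hy
    have hF := FF_hasDerivAt hr1 hy
    have h1 : HasDerivAt (fun t => FF t ^ 2 * (1 - t))
        (2 * FF y ^ 1 * (∑' n, cc n * ((n : ℝ) * y ^ (n - 1))) * (1 - y) + FF y ^ 2 * (0 - 1)) y := by
      exact ((hF.pow 2).mul ((hasDerivAt_const y (1:ℝ)).sub (hasDerivAt_id y)))
    have heq : 2 * FF y ^ 1 * (∑' n, cc n * ((n : ℝ) * y ^ (n - 1))) * (1 - y) + FF y ^ 2 * (0 - 1) = 0 := by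
      have hode := FF_ode (hmem y hy)
      linear_combination (FF y) * hode
    rwa [heq] at h1
  -- G constant on s
  have hconst : ∀ y ∈ s, FF y ^ 2 * (1 - y) = FF 0 ^ 2 * (1 - 0) := by
    intro y hy
    have h0 : (0:ℝ) ∈ s := ⟨neg_lt_zero.mpr hrpos, hrpos⟩
    apply (convex_Ioo (-r) r).is_const_of_fderivWithin_eq_zero
      (fun t ht => ((hG t ht).differentiableAt).differentiableWithinAt) ?_ hy h0
    intro t ht
    have hu : UniqueDiffWithinAt ℝ s t := isOpen_Ioo.uniqueDiffWithinAt ht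
    have := ((hG t ht).hasFDerivAt).hasFDerivWithinAt.fderivWithin hu
    rw [this]
    ext
    simp
  have hz' : z ∈ s := ⟨neg_lt_of_abs_lt hzr, lt_of_abs_lt hzr⟩
  have := hconst z hz'
  rw [this, FF_zero]; ring

lemma FF_pos {z : ℝ} (hz : |z| < 1) : 0 < FF z := by
  rcases lt_trichotomy (FF z) 0 with h | h | h
  · -- IVT contradiction
    exfalso
    set r := (|z| + 1) / 2 with hrdef
    have hr1 : r < 1 := by rw [hrdef]; linarith
    have hzr : |z| < r := by rw [hrdef]; linarith [abs_nonneg z]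
    have hrpos : 0 < r := lt_of_le_of_lt (abs_nonneg z) hzr
    have hcont : ContinuousOn FF (Set.uIcc z 0) := by
      intro y hy
      have hy' : y ∈ Set.Ioo (-r) r := by
        have hsub : Set.uIcc z 0 ⊆ Set.Ioo (-r) r :=
          (Set.ordConnected_Ioo).uIcc_subset ⟨neg_lt_of_abs_lt hzr, lt_of_abs_lt hzr⟩
            ⟨neg_lt_zero.mpr hrpos, hrpos⟩
        exact hsub hy
      exact ((FF_hasDerivAt hr1 hy').differentiableAt).continuousAt.continuousWithinAt
    have h0mem : (0:ℝ) ∈ Set.uIcc (FF z) (FF 0) := by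
      rw [FF_zero]
      exact Set.mem_uIcc.mpr (Or.inl ⟨le_of_lt h, zero_le_one⟩)
    obtain ⟨y, hy, hFy⟩ := intermediate_value_uIcc hcont h0mem
    have hyabs : |y| < 1 := by
      have hsub2 : Set.uIcc z 0 ⊆ Set.Ioo (-(1:ℝ)) 1 :=
        (Set.ordConnected_Ioo).uIcc_subset ⟨neg_lt_of_abs_lt hz, lt_of_abs_lt hz⟩ (by norm_num)
      have := hsub2 hy
      exact abs_lt.mpr ⟨this.1, this.2⟩
    have := FF_sq hyabs
    rw [hFy] at this
    norm_num at this
  · exfalso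
    have := FF_sq hz
    rw [h] at this; norm_num at this
  · exact h

lemma hasSum_cc {z : ℝ} (hz : |z| < 1) :
    HasSum (fun l : ℕ => cc l * z ^ l) (1 / Real.sqrt (1 - z)) := by
  have h := (summable_cc hz).hasSum
  have hFF : FF z = 1 / Real.sqrt (1 - z) := by
    have hsq := FF_sq hz
    have h1z : 0 < 1 - z := by cases' abs_lt.mp hz with h1 h2; linarith
    have : FF z ^ 2 = 1 / (1 - z) := by
      field_simp at hsq ⊢
      linarith [hsq]
    have hpos := FF_pos hz
    rw [← Real.sqrt_sq hpos.le, this, one_div, Real.sqrt_inv, one_div]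
  rw [FF] at hFF
  rwa [hFF] at h

/-- Resummation of the moment integrals of the potential `φ` into a single
closed-form integral involving the unperturbed energy `ε₀`. -/
theorem moment_integral_resummation
    (ε₀ q x₀ x : ℝ) (hε : 0 < ε₀) (hx : x₀ ≤ x)
    (φ : ℝ → ℝ) (hφ : ContinuousOn φ (Set.Icc x₀ x))
    (hb : ∀ x' ∈ Set.Icc x₀ x, |q * φ x'| < ε₀) :
    HasSum
      (fun l : ℕ =>
        ((Nat.factorial (2 * l) : ℝ) / (4 ^ l * (Nat.factorial l : ℝ) ^ 2)) *
          (q / ε₀) ^ l * ∫ x' in x₀..x, (φ x') ^ (l + 1))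
      (Real.sqrt ε₀ * ∫ x' in x₀..x, φ x' / Real.sqrt (ε₀ - q * φ x')) := by
  have hK : IsCompact (Set.Icc x₀ x) := isCompact_Icc
  have hne : (Set.Icc x₀ x).Nonempty := Set.nonempty_Icc.mpr hx
  -- uniform bound ρ < 1 on |q φ| / ε₀
  have hcont1 : ContinuousOn (fun x' => |q * φ x'|) (Set.Icc x₀ x) :=
    (continuousOn_const.mul hφ).abs
  obtain ⟨m, hm, hmax⟩ := hK.exists_isMaxOn hne hcont1
  set ρ : ℝ := |q * φ m| / ε₀ with hρdef
  have hρ0 : 0 ≤ ρ := div_nonneg (abs_nonneg _) hε.le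
  have hρ1 : ρ < 1 := (div_lt_one hε).mpr (hb m hm)
  have hbound : ∀ x' ∈ Set.Icc x₀ x, |q * φ x'| ≤ ρ * ε₀ := by
    intro x' hx'
    have := hmax hx'
    simp only [hρdef]
    rw [div_mul_cancel₀ _ hε.ne']
    exact this
  -- bound M on |φ|
  obtain ⟨m2, hm2, hmax2⟩ := hK.exists_isMaxOn hne hφ.abs
  set M : ℝ := |φ m2| with hMdef
  have hM0 : 0 ≤ M := abs_nonneg _
  have hMb : ∀ x' ∈ Set.Icc x₀ x, |φ x'| ≤ M := fun x' hx' => hmax2 hx'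
  -- the summand functions
  set F : ℕ → ℝ → ℝ := fun l a => (cc l * (q / ε₀) ^ l) * φ a ^ (l + 1) with hFdef
  -- pointwise HasSum on Icc
  have hpt : ∀ a ∈ Set.Icc x₀ x, HasSum (fun l => F l a)
      (Real.sqrt ε₀ * (φ a / Real.sqrt (ε₀ - q * φ a))) := by
    intro a ha
    set z : ℝ := q * φ a / ε₀ with hzdef
    have hzabs : |z| < 1 := by
      rw [hzdef, abs_div, abs_of_pos hε, div_lt_one hε]
      exact hb a ha
    have h1 := (hasSum_cc hzabs).mul_right (φ a)
    have hfun : (fun l => cc l * z ^ l * φ a) = fun l => F l a := by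
      funext l
      have hzl : z ^ l = (q / ε₀) ^ l * φ a ^ l := by
        rw [hzdef, ← mul_pow]
        congr 1
        ring
      show cc l * z ^ l * φ a = cc l * (q / ε₀) ^ l * φ a ^ (l + 1)
      rw [hzl, pow_succ]
      ring
    rw [hfun] at h1
    have hval : 1 / Real.sqrt (1 - z) * φ a = Real.sqrt ε₀ * (φ a / Real.sqrt (ε₀ - q * φ a)) := by
      have h1z : 1 - z = (ε₀ - q * φ a) / ε₀ := by
        rw [hzdef]; field_simp
      have hnum : 0 ≤ ε₀ - q * φ a := by
        have := abs_lt.mp (hb a ha)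
        linarith [this.2]
      rw [h1z, Real.sqrt_div hnum, one_div_div]
      ring
    rwa [hval] at h1
  -- integrability
  have hInt : ∀ l : ℕ, IntegrableOn (F l) (Set.Ioc x₀ x) volume := by
    intro l
    exact ((continuousOn_const.mul (hφ.pow (l+1))).integrableOn_Icc).mono_set Set.Ioc_subset_Icc_self
  -- norm bound
  have hFb : ∀ l : ℕ, ∀ a ∈ Set.Icc x₀ x, ‖F l a‖ ≤ M * ρ ^ l := by
    intro l a ha
    rw [hFdef, Real.norm_eq_abs, abs_mul, abs_mul, abs_pow, abs_pow,
      abs_of_pos (cc_pos l)]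
    have hstep : |q / ε₀| ^ l * |φ a| ^ (l+1) ≤ ρ ^ l * M := by
      rw [pow_succ, ← mul_assoc]
      have hcomb : |q / ε₀| ^ l * |φ a| ^ l = (|q * φ a| / ε₀) ^ l := by
        rw [← mul_pow, abs_div, abs_of_pos hε, abs_mul]
        congr 1
        field_simp
      rw [hcomb]
      apply mul_le_mul _ (hMb a ha) (abs_nonneg _) (by positivity)
      apply pow_le_pow_left₀ (by positivity)
      rw [div_le_iff₀ hε]
      exact hbound a ha
    calc cc l * |q / ε₀| ^ l * |φ a| ^ (l+1)
          = cc l * (|q / ε₀| ^ l * |φ a| ^ (l+1)) := by ring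
      _ ≤ 1 * (ρ ^ l * M) :=
          mul_le_mul (cc_le_one l) hstep (by positivity) zero_le_one
      _ = M * ρ ^ l := by ring
  -- summability of integral norms
  have hvol : (volume (Set.Ioc x₀ x)).toReal = x - x₀ := by
    rw [Real.volume_Ioc, ENNReal.toReal_ofReal (by linarith)]
  have hSumNorm : Summable (fun l => ∫ a in Set.Ioc x₀ x, ‖F l a‖) := by
    apply Summable.of_nonneg_of_le
      (fun l => integral_nonneg (fun a => norm_nonneg _))
      (fun l => ?_)
      ((summable_geometric_of_lt_one hρ0 hρ1).mul_left (M * (x - x₀)))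
    have hmeas : volume (Set.Ioc x₀ x) < ⊤ := by
      rw [Real.volume_Ioc]; exact ENNReal.ofReal_lt_top
    have hle : ‖∫ a in Set.Ioc x₀ x, ‖F l a‖‖ ≤ (M * ρ ^ l) * (volume (Set.Ioc x₀ x)).toReal := by
      apply norm_setIntegral_le_of_norm_le_const hmeas
      intro a ha
      rw [norm_norm]
      exact hFb l a (Set.Ioc_subset_Icc_self ha)
    have h2 : |∫ a in Set.Ioc x₀ x, ‖F l a‖| ≤ (M * ρ ^ l) * (volume (Set.Ioc x₀ x)).toReal := by
      rw [← Real.norm_eq_abs]; exact hle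
    have h3 := le_trans (le_abs_self _) h2
    rw [hvol] at h3
    exact h3.trans_eq (by ring)
  -- interchange sum and integral
  have hInt' : ∀ l : ℕ, Integrable (F l) (volume.restrict (Set.Ioc x₀ x)) := hInt
  have H := hasSum_integral_of_summable_integral_norm (μ := volume.restrict (Set.Ioc x₀ x))
    hInt' hSumNorm
  -- identify the sum value
  have hval : (∫ a in Set.Ioc x₀ x, ∑' l, F l a)
      = Real.sqrt ε₀ * ∫ x' in x₀..x, φ x' / Real.sqrt (ε₀ - q * φ x') := by
    rw [intervalIntegral.integral_of_le hx, ← integral_const_mul]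
    apply setIntegral_congr_fun measurableSet_Ioc
    intro a ha
    exact (hpt a (Set.Ioc_subset_Icc_self ha)).tsum_eq
  rw [hval] at H
  -- identify the terms
  have hterm : (fun l : ℕ => ∫ a in Set.Ioc x₀ x, F l a)
      = fun l : ℕ => ((Nat.factorial (2 * l) : ℝ) / (4 ^ l * (Nat.factorial l : ℝ) ^ 2)) *
          (q / ε₀) ^ l * ∫ x' in x₀..x, (φ x') ^ (l + 1) := by
    funext l
    rw [intervalIntegral.integral_of_le hx]
    show ∫ a in Set.Ioc x₀ x, (cc l * (q / ε₀) ^ l) * φ a ^ (l + 1)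
      = (cc l * (q / ε₀) ^ l) * ∫ a in Set.Ioc x₀ x, φ a ^ (l + 1)
    exact integral_const_mul _ _
  rwa [hterm] at H
end

section
/- Let m > 0 and q ≠ 0 be reals, and let φ, u, ψ, with φ, u : ℝ × ℝ → ℝ and ψ : ℝ × ℝ × ℝ → ℝ, be continuously differentiable. Define the Vlasov operator V̂ acting on functions g(x,v,t) by V̂g := ∂g/∂t + v·∂g/∂x − (q/m)·(∂φ/∂x)·∂g/∂v, and define ε(x,v,t) := q·φ(x,t) + (1/2)·m·(v − u(x,t))² + q·ψ(x,v,t). Then for all (x,v,t): (V̂ε)(x,v,t) = 0 holds if and only if q·(V̂ψ)(x,v,t) = m·(v − u(x,t))·( ∂u/∂t + v·∂u/∂x )(x,t) − q·( ∂φ/∂t + u·∂φ/∂x )(x,t). -/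
open Real

/-- One-dimensional electrostatic form of the paper's central identity: with
`ε = qφ + (1/2)m(v−u)² + qψ`, the Vlasov equation `V̂ε = 0` holds iff the
generating function `ψ` satisfies
`q V̂ψ = m(v−u)(∂ₜu + v ∂ₓu) − q(∂ₜφ + u ∂ₓφ)`. -/
theorem vlasov_iff_generating_function
    (m q : ℝ) (hm : 0 < m) (hq : q ≠ 0)
    (φ u : ℝ × ℝ → ℝ) (hφ : ContDiff ℝ 1 φ) (hu : ContDiff ℝ 1 u)
    (ψ : ℝ × ℝ × ℝ → ℝ) (hψ : ContDiff ℝ 1 ψ)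
    (Vhat : (ℝ × ℝ × ℝ → ℝ) → ℝ × ℝ × ℝ → ℝ)
    (hV : ∀ (g : ℝ × ℝ × ℝ → ℝ) (x v t : ℝ),
      Vhat g (x, v, t) =
        deriv (fun t' => g (x, v, t')) t
          + v * deriv (fun x' => g (x', v, t)) x
          - (q / m) * deriv (fun x' => φ (x', t)) x *
              deriv (fun v' => g (x, v', t)) v)
    (ε : ℝ × ℝ × ℝ → ℝ)
    (hε : ∀ x v t, ε (x, v, t) =
      q * φ (x, t) + (1 / 2) * m * (v - u (x, t)) ^ 2 + q * ψ (x, v, t)) :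
    ∀ x v t,
      Vhat ε (x, v, t) = 0 ↔
        q * Vhat ψ (x, v, t) =
          m * (v - u (x, t)) *
              (deriv (fun t' => u (x, t')) t + v * deriv (fun x' => u (x', t)) x)
            - q * (deriv (fun t' => φ (x, t')) t
                + u (x, t) * deriv (fun x' => φ (x', t)) x) := by
  intro x v t
  have hφd : Differentiable ℝ φ := hφ.differentiable one_ne_zero
  have hud : Differentiable ℝ u := hu.differentiable one_ne_zero
  have hψd : Differentiable ℝ ψ := hψ.differentiable one_ne_zero
  -- slice differentiabilities
  have dφt : Differentiable ℝ (fun t' => φ (x, t')) :=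
    hφd.comp ((differentiable_const _).prodMk differentiable_id)
  have dφx : Differentiable ℝ (fun x' => φ (x', t)) :=
    hφd.comp (differentiable_id.prodMk (differentiable_const _))
  have dut : Differentiable ℝ (fun t' => u (x, t')) :=
    hud.comp ((differentiable_const _).prodMk differentiable_id)
  have dux : Differentiable ℝ (fun x' => u (x', t)) :=
    hud.comp (differentiable_id.prodMk (differentiable_const _))
  have dψt : Differentiable ℝ (fun t' => ψ (x, v, t')) :=
    hψd.comp ((differentiable_const _).prodMk
      ((differentiable_const _).prodMk differentiable_id))
  have dψx : Differentiable ℝ (fun x' => ψ (x', v, t)) :=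
    hψd.comp (differentiable_id.prodMk (differentiable_const _))
  have dψv : Differentiable ℝ (fun v' => ψ (x, v', t)) :=
    hψd.comp ((differentiable_const _).prodMk
      (differentiable_id.prodMk (differentiable_const _)))
  set φt := deriv (fun t' => φ (x, t')) t with hφt
  set φx := deriv (fun x' => φ (x', t)) x with hφx
  set ut := deriv (fun t' => u (x, t')) t with hut
  set ux := deriv (fun x' => u (x', t)) x with hux
  set ψt := deriv (fun t' => ψ (x, v, t')) t with hψt
  set ψx := deriv (fun x' => ψ (x', v, t)) x with hψx
  set ψv := deriv (fun v' => ψ (x, v', t)) v with hψv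
  have Hφt : HasDerivAt (fun t' => φ (x, t')) φt t := (dφt t).hasDerivAt
  have Hφx : HasDerivAt (fun x' => φ (x', t)) φx x := (dφx x).hasDerivAt
  have Hut : HasDerivAt (fun t' => u (x, t')) ut t := (dut t).hasDerivAt
  have Hux : HasDerivAt (fun x' => u (x', t)) ux x := (dux x).hasDerivAt
  have Hψt : HasDerivAt (fun t' => ψ (x, v, t')) ψt t := (dψt t).hasDerivAt
  have Hψx : HasDerivAt (fun x' => ψ (x', v, t)) ψx x := (dψx x).hasDerivAt
  have Hψv : HasDerivAt (fun v' => ψ (x, v', t)) ψv v := (dψv v).hasDerivAt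
  -- derivative of ε in t
  have hεt : deriv (fun t' => ε (x, v, t')) t
      = q * φt + (1/2) * m * ((2 : ℕ) * (v - u (x, t)) ^ 1 * (0 - ut)) + q * ψt := by
    have hfun : (fun t' => ε (x, v, t'))
        = fun t' => q * φ (x, t') + (1/2) * m * (v - u (x, t')) ^ 2 + q * ψ (x, v, t') :=
      funext fun t' => hε x v t'
    rw [hfun]
    exact (((Hφt.const_mul q).add
      ((((hasDerivAt_const t v).sub Hut).pow 2).const_mul ((1/2) * m))).add
      (Hψt.const_mul q)).deriv
  have hεx : deriv (fun x' => ε (x', v, t)) x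
      = q * φx + (1/2) * m * ((2 : ℕ) * (v - u (x, t)) ^ 1 * (0 - ux)) + q * ψx := by
    have hfun : (fun x' => ε (x', v, t))
        = fun x' => q * φ (x', t) + (1/2) * m * (v - u (x', t)) ^ 2 + q * ψ (x', v, t) :=
      funext fun x' => hε x' v t
    rw [hfun]
    exact (((Hφx.const_mul q).add
      ((((hasDerivAt_const x v).sub Hux).pow 2).const_mul ((1/2) * m))).add
      (Hψx.const_mul q)).deriv
  have hεv : deriv (fun v' => ε (x, v', t)) v
      = 0 + (1/2) * m * ((2 : ℕ) * (v - u (x, t)) ^ 1 * (1 - 0)) + q * ψv := by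
    have hfun : (fun v' => ε (x, v', t))
        = fun v' => q * φ (x, t) + (1/2) * m * (v' - u (x, t)) ^ 2 + q * ψ (x, v', t) :=
      funext fun v' => hε x v' t
    rw [hfun]
    exact (((hasDerivAt_const v (q * φ (x, t))).add
      ((((hasDerivAt_id v).sub (hasDerivAt_const v (u (x, t)))).pow 2).const_mul
        ((1/2) * m))).add (Hψv.const_mul q)).deriv
  have hVε := hV ε x v t
  have hVψ := hV ψ x v t
  rw [hεt, hεx, hεv] at hVε
  have key : Vhat ε (x, v, t)
      = q * Vhat ψ (x, v, t)
        - (m * (v - u (x, t)) * (ut + v * ux)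
            - q * (φt + u (x, t) * φx)) := by
    rw [hVε, hVψ]
    field_simp
    ring
  rw [key, sub_eq_zero]
end

section
/- Let x₀ ≤ x be reals and let φ : ℝ → ℝ be continuous with |φ(x')| ≤ M for all x' ∈ [x₀, x]. Define I_n := ∫_{x₀}^{x} φ(x')^n dx' and C_n := ∑_{l=0}^{n} ((−1)^l / (l!(n−l)!)) · φ(x)^{n−l} · I_{l+1}. Then |C_n| ≤ M^{n+1}·(x − x₀)·2^n/n! for every n, and consequently for every real R, lim_{n→∞} R^n · ((2n)!/(4^n (n!)²)) · C_n = 0. -/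
open Real MeasureTheory Filter

/-- The remainder term in the iterative construction of the growth-rate
generating function vanishes: the integral polynomials `C n` satisfy
`|C n| ≤ M^{n+1} (x − x₀) 2^n / n!`, and consequently
`R^n ((2n)!/(4^n (n!)²)) C n → 0` for every real `R`. -/
theorem remainder_term_vanishes
    (x₀ x M : ℝ) (hx : x₀ ≤ x)
    (φ : ℝ → ℝ) (hφ : ContinuousOn φ (Set.Icc x₀ x))
    (hM : ∀ x' ∈ Set.Icc x₀ x, |φ x'| ≤ M)
    (I : ℕ → ℝ) (hI : ∀ n, I n = ∫ x' in x₀..x, (φ x') ^ n)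
    (C : ℕ → ℝ)
    (hC : ∀ n, C n = ∑ l ∈ Finset.range (n + 1),
      ((-1 : ℝ) ^ l / ((Nat.factorial l : ℝ) * (Nat.factorial (n - l) : ℝ))) *
        (φ x) ^ (n - l) * I (l + 1)) :
    (∀ n : ℕ, |C n| ≤ M ^ (n + 1) * (x - x₀) * 2 ^ n / (Nat.factorial n : ℝ)) ∧
    ∀ R : ℝ,
      Tendsto
        (fun n : ℕ =>
          R ^ n * ((Nat.factorial (2 * n) : ℝ) / (4 ^ n * (Nat.factorial n : ℝ) ^ 2)) * C n)
        atTop (nhds 0) := by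
  have hM0 : 0 ≤ M := le_trans (abs_nonneg _) (hM x₀ ⟨le_refl _, hx⟩)
  have hφx : |φ x| ≤ M := hM x ⟨hx, le_refl _⟩
  -- bound on the moment integrals
  have hIbound : ∀ n : ℕ, |I n| ≤ M ^ n * (x - x₀) := by
    intro n
    rw [hI n]
    have hb : ∀ x' ∈ Set.uIoc x₀ x, ‖(φ x') ^ n‖ ≤ M ^ n := by
      intro x' hx'
      rw [Set.uIoc_of_le hx] at hx'
      have hx'' : x' ∈ Set.Icc x₀ x := ⟨le_of_lt hx'.1, hx'.2⟩
      rw [norm_pow, Real.norm_eq_abs]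
      exact pow_le_pow_left₀ (abs_nonneg _) (hM x' hx'') n
    have := intervalIntegral.norm_integral_le_of_norm_le_const hb
    rwa [Real.norm_eq_abs, abs_of_nonneg (by linarith : (0:ℝ) ≤ x - x₀)] at this
  have hCb : ∀ n : ℕ, |C n| ≤ M ^ (n + 1) * (x - x₀) * 2 ^ n / (Nat.factorial n : ℝ) := by
    intro n
    rw [hC n]
    calc |∑ l ∈ Finset.range (n + 1),
        ((-1 : ℝ) ^ l / ((Nat.factorial l : ℝ) * (Nat.factorial (n - l) : ℝ))) *
          (φ x) ^ (n - l) * I (l + 1)|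
        ≤ ∑ l ∈ Finset.range (n + 1),
          |((-1 : ℝ) ^ l / ((Nat.factorial l : ℝ) * (Nat.factorial (n - l) : ℝ))) *
            (φ x) ^ (n - l) * I (l + 1)| := Finset.abs_sum_le_sum_abs _ _
      _ ≤ ∑ l ∈ Finset.range (n + 1),
          (1 / ((Nat.factorial l : ℝ) * (Nat.factorial (n - l) : ℝ))) *
            (M ^ (n + 1) * (x - x₀)) := by
          apply Finset.sum_le_sum
          intro l hl
          have hl' : l ≤ n := Nat.lt_succ_iff.mp (Finset.mem_range.mp hl)
          have hfac : (0:ℝ) < (Nat.factorial l : ℝ) * (Nat.factorial (n - l) : ℝ) := by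
            positivity
          rw [abs_mul, abs_mul, abs_div, abs_pow, abs_neg, abs_one, one_pow,
            abs_of_pos hfac, abs_pow]
          have h1 : |φ x| ^ (n - l) ≤ M ^ (n - l) :=
            pow_le_pow_left₀ (abs_nonneg _) hφx _
          have h2 : |I (l + 1)| ≤ M ^ (l + 1) * (x - x₀) := hIbound (l + 1)
          have h3 : |φ x| ^ (n - l) * |I (l + 1)| ≤ M ^ (n - l) * (M ^ (l + 1) * (x - x₀)) :=
            mul_le_mul h1 h2 (abs_nonneg _) (by positivity)
          have h4 : M ^ (n - l) * (M ^ (l + 1) * (x - x₀)) = M ^ (n + 1) * (x - x₀) := by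
            rw [← mul_assoc, ← pow_add]
            congr 2
            omega
          rw [mul_assoc]
          exact mul_le_mul_of_nonneg_left (h4 ▸ h3) (one_div_nonneg.mpr hfac.le)
      _ = M ^ (n + 1) * (x - x₀) * 2 ^ n / (Nat.factorial n : ℝ) := by
          rw [← Finset.sum_mul]
          have hsum : ∑ l ∈ Finset.range (n + 1),
              (1 / ((Nat.factorial l : ℝ) * (Nat.factorial (n - l) : ℝ)))
              = 2 ^ n / (Nat.factorial n : ℝ) := by
            have h2n : ((2:ℝ) ^ n) = ∑ l ∈ Finset.range (n + 1), ((n.choose l : ℝ)) := by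
              rw [← Nat.cast_sum, Nat.sum_range_choose, Nat.cast_pow]; norm_num
            rw [eq_div_iff (by positivity : ((Nat.factorial n : ℝ)) ≠ 0), Finset.sum_mul,
              h2n]
            apply Finset.sum_congr rfl
            intro l hl
            have hl' : l ≤ n := Nat.lt_succ_iff.mp (Finset.mem_range.mp hl)
            rw [Nat.cast_choose ℝ hl']
            field_simp
          rw [hsum]
          ring
  refine ⟨hCb, ?_⟩
  intro R
  -- the central binomial factor is at most 1
  have hcb : ∀ n : ℕ, (Nat.factorial (2 * n) : ℝ) / (4 ^ n * (Nat.factorial n : ℝ) ^ 2) ≤ 1 := by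
    intro n
    rw [div_le_one (by positivity)]
    have h1 : Nat.factorial (2 * n) = Nat.choose (2 * n) n * Nat.factorial n * Nat.factorial n := by
      have := Nat.choose_mul_factorial_mul_factorial (show n ≤ 2 * n by omega)
      rw [show 2 * n - n = n by omega] at this
      omega
    have h2 : Nat.choose (2 * n) n ≤ 4 ^ n := by
      calc Nat.choose (2 * n) n ≤ ∑ m ∈ Finset.range (2 * n + 1), (2 * n).choose m :=
            Finset.single_le_sum (fun i _ => Nat.zero_le _) (Finset.mem_range.mpr (by omega))
        _ = 2 ^ (2 * n) := Nat.sum_range_choose _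
        _ = 4 ^ n := by rw [pow_mul]; norm_num
    have : (Nat.factorial (2 * n) : ℝ) ≤ (4 ^ n : ℝ) * (Nat.factorial n : ℝ) ^ 2 := by
      rw [h1]
      push_cast
      have h2' : ((2 * n).choose n : ℝ) ≤ (4:ℝ) ^ n := by exact_mod_cast h2
      nlinarith [(Nat.cast_pos (α := ℝ)).mpr (Nat.factorial_pos n)]
    linarith
  have hcb0 : ∀ n : ℕ, (0:ℝ) ≤ (Nat.factorial (2 * n) : ℝ) / (4 ^ n * (Nat.factorial n : ℝ) ^ 2) :=
    fun n => by positivity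
  apply squeeze_zero_norm
    (a := fun n : ℕ => (M * (x - x₀)) * ((2 * |R| * M) ^ n / (Nat.factorial n : ℝ)))
  · intro n
    rw [Real.norm_eq_abs, abs_mul, abs_mul, abs_pow, abs_of_nonneg (hcb0 n)]
    calc |R| ^ n * ((Nat.factorial (2 * n) : ℝ) / (4 ^ n * (Nat.factorial n : ℝ) ^ 2)) * |C n|
        ≤ |R| ^ n * 1 * (M ^ (n + 1) * (x - x₀) * 2 ^ n / (Nat.factorial n : ℝ)) := by
          apply mul_le_mul
          · exact mul_le_mul_of_nonneg_left (hcb n) (by positivity)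
          · exact hCb n
          · exact abs_nonneg _
          · positivity
      _ = (M * (x - x₀)) * ((2 * |R| * M) ^ n / (Nat.factorial n : ℝ)) := by
          rw [mul_pow, mul_pow]
          have : M ^ (n + 1) = M * M ^ n := by ring
          rw [this]
          ring
  · have := (FloorSemiring.tendsto_pow_div_factorial_atTop (K := ℝ)
      (2 * |R| * M)).const_mul (M * (x - x₀))
    simpa using this
end
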